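/- arXiv:1608.02655 — 2 statements merged into one kernel-verified Lean document; each statement's English description precedes it below -/
import Mathlib

section
/- Let L > 0, Re ≥ 1, γ = (1/5.1)Re⁻¹, and α ∈ ℕ with α ≥ 2. Suppose β_d: [0,L] → [0,∞) satisfies β_d(z) = (z/L)^α (1−z/L)^α for z ∈ [L−γL, L] and β_d(z) = β_d(L−z) on [0,γL]. Then Re³ · (1/L) ∫_{L−γL}^{L} β_d(z) dz ≤ C for a constant C independent of Re and L (one may take C = 5.1⁻³). -/
/-- Key estimate for Corollary 3.4: with the modified damping function β_d vanishing
to order α ≥ 2 at the wall, Re³·(1/L)∫_{L−γL}^{L} β_d(z) dz ≤ 5.1⁻³. -/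
theorem stmt_8 (L Re γ : ℝ) (hL : 0 < L) (hRe : 1 ≤ Re)
    (hγ : γ = (1/5.1) * Re⁻¹) (α : ℕ) (hα : 2 ≤ α)
    (βd : ℝ → ℝ) (hnn : ∀ z ∈ Set.Icc (0:ℝ) L, 0 ≤ βd z)
    (htop : ∀ z ∈ Set.Icc (L - γ*L) L, βd z = (z/L)^α * (1 - z/L)^α)
    (hsym : ∀ z ∈ Set.Icc (0:ℝ) (γ*L), βd z = βd (L - z)) :
    Re^3 * ((1/L) * ∫ z in (L - γ*L)..L, βd z) ≤ ((5.1:ℝ)⁻¹)^3 := by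
  have hRe0 : (0:ℝ) < Re := lt_of_lt_of_le one_pos hRe
  have hγpos : 0 < γ := by
    rw [hγ]; positivity
  have hγle : γ ≤ 1/5.1 := by
    rw [hγ]
    have : Re⁻¹ ≤ 1 := by
      rw [inv_le_one_iff₀]; right; exact hRe
    nlinarith
  have hγ1 : γ ≤ 1 := hγle.trans (by norm_num)
  have hab : L - γ*L ≤ L := by nlinarith
  -- replace βd by the polynomial on the interval
  have h1 : ∫ z in (L - γ*L)..L, βd z = ∫ z in (L - γ*L)..L, (z/L)^α * (1 - z/L)^α := by
    apply intervalIntegral.integral_congr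
    intro z hz
    rw [Set.uIcc_of_le hab] at hz
    exact htop z hz
  -- bound by (1 - z/L)^2
  have h2 : (∫ z in (L - γ*L)..L, (z/L)^α * (1 - z/L)^α)
      ≤ ∫ z in (L - γ*L)..L, (1 - z/L)^2 := by
    apply intervalIntegral.integral_mono_on hab
    · apply Continuous.intervalIntegrable; fun_prop
    · apply Continuous.intervalIntegrable; fun_prop
    · intro z hz
      obtain ⟨hz1, hz2⟩ := hz
      have hz0 : 0 ≤ z := by nlinarith
      have hzl : z/L ≤ 1 := by
        rw [div_le_one hL]; exact hz2
      have hzl0 : 0 ≤ z/L := by positivity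
      have h1z0 : 0 ≤ 1 - z/L := by linarith
      have h1z1 : 1 - z/L ≤ 1 := by linarith
      calc (z/L)^α * (1 - z/L)^α ≤ 1 * (1 - z/L)^α := by
            apply mul_le_mul_of_nonneg_right _ (by positivity)
            exact pow_le_one₀ hzl0 hzl
        _ = (1 - z/L)^α := one_mul _
        _ ≤ (1 - z/L)^2 := pow_le_pow_of_le_one h1z0 h1z1 hα
  -- compute the integral of (1 - z/L)^2
  have h3 : (∫ z in (L - γ*L)..L, (1 - z/L)^2) = γ^3 * L / 3 := by
    have hcongr : (∫ z in (L - γ*L)..L, (1 - z/L)^2)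
        = ∫ z in (L - γ*L)..L, ((L - z)/L)^2 := by
      apply intervalIntegral.integral_congr
      intro z _
      congr 1
      field_simp
    rw [hcongr]
    have := intervalIntegral.integral_comp_sub_left (a := L - γ*L) (b := L)
      (fun x => (x/L)^2) L
    rw [this]
    have hx : (∫ x in (L - L)..(L - (L - γ*L)), (x/L)^2)
        = ∫ x in (0:ℝ)..(γ*L), (x/L)^2 := by
      congr 1 <;> ring
    rw [hx]
    have : (∫ x in (0:ℝ)..(γ*L), (x/L)^2) = (∫ x in (0:ℝ)..(γ*L), x^2) / L^2 := by
      rw [← intervalIntegral.integral_div]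
      congr 1; ext x; rw [div_pow]
    rw [this, integral_pow]
    field_simp
    ring
  have hge : (0:ℝ) < γ^3 * L / 3 := by positivity
  calc Re^3 * ((1/L) * ∫ z in (L - γ*L)..L, βd z)
      ≤ Re^3 * ((1/L) * (γ^3 * L / 3)) := by
        apply mul_le_mul_of_nonneg_left _ (by positivity)
        apply mul_le_mul_of_nonneg_left _ (by positivity)
        rw [h1, ← h3]; exact h2
    _ = Re^3 * γ^3 / 3 := by field_simp
    _ = (1/5.1)^3 / 3 := by
        rw [hγ]
        field_simp
    _ ≤ ((5.1:ℝ)⁻¹)^3 := by norm_num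
end

section
/- Let Ω = (0,L)³, γ ∈ (0,1), U > 0, and suppose u, Φ ∈ H¹(Ω;ℝ³) with ‖∇Φ‖_{L^∞(O)} ≤ U/(γL) on the strip O = {L−γL ≤ z ≤ L}, supp Φ ⊂ O̅, ‖u−Φ‖_{L²(O)} ≤ γL‖∇(u−Φ)‖_{L²(O)}, and ‖∇Φ‖_{L²(Ω)}² ≤ U²L/γ. Then |∫_O ((u−Φ)·∇Φ)·(u−Φ) dx| ≤ 2γLU‖∇u‖_{L²(Ω)}² + 2U³L². -/
/-!
With `w = u - Φ`, the integrand `((w·∇)Φ)·w` is bounded pointwise by `|∇Φ| |w|²`, since the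
operator norm of a matrix is at most its Frobenius norm; on the strip this is at most
`U/(γL) |w|²`. The Poincaré hypothesis trades `∫_O |w|²` for `(γL)² ∫_O |∇w|²`, the strip lies in
the closed cube, which differs from `Ω` by a null set, and `|∇w|² ≤ 2|∇u|² + 2|∇Φ|²` combined with
`‖∇Φ‖² ≤ U²L/γ` gives the bound.
-/

/-- Squared Frobenius norm of the Jacobian of a vector field on ℝ³. -/
noncomputable def jacFrobSq (v : EuclideanSpace ℝ (Fin 3) → EuclideanSpace ℝ (Fin 3))
    (p : EuclideanSpace ℝ (Fin 3)) : ℝ :=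
  ∑ i : Fin 3, ∑ j : Fin 3, (fderiv ℝ v p (EuclideanSpace.single j 1) i)^2

/-- Convective integrand ((a·∇v)·w)(p). -/
noncomputable def convTerm (a v w : EuclideanSpace ℝ (Fin 3) → EuclideanSpace ℝ (Fin 3))
    (p : EuclideanSpace ℝ (Fin 3)) : ℝ :=
  ∑ i : Fin 3, (fderiv ℝ v p (a p) i) * (w p i)

open MeasureTheory Set

section Frobenius

variable {ι κ : Type*} [Fintype ι] [DecidableEq ι]

lemma apply_eq_sum_mul_apply_single (D : EuclideanSpace ℝ ι →L[ℝ] EuclideanSpace ℝ κ)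
    (x : EuclideanSpace ℝ ι) (i : κ) :
    D x i = ∑ j : ι, x j * D (EuclideanSpace.single j 1) i := by
  conv_lhs => rw [← (EuclideanSpace.basisFun ι ℝ).sum_repr x]
  simp [map_sum, WithLp.ofLp_sum]

variable [Fintype κ]

noncomputable def frobSq (D : EuclideanSpace ℝ ι →L[ℝ] EuclideanSpace ℝ κ) : ℝ :=
  ∑ i : κ, ∑ j : ι, (D (EuclideanSpace.single j 1) i) ^ 2

lemma frobSq_nonneg (D : EuclideanSpace ℝ ι →L[ℝ] EuclideanSpace ℝ κ) : 0 ≤ frobSq D := by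
  unfold frobSq; positivity

lemma norm_apply_le_sqrt_frobSq_mul (D : EuclideanSpace ℝ ι →L[ℝ] EuclideanSpace ℝ κ)
    (x : EuclideanSpace ℝ ι) : ‖D x‖ ≤ √(frobSq D) * ‖x‖ := by
  have hsq : ‖D x‖ ^ 2 ≤ frobSq D * ‖x‖ ^ 2 := by
    rw [EuclideanSpace.real_norm_sq_eq, EuclideanSpace.real_norm_sq_eq, frobSq, Finset.sum_mul]
    refine Finset.sum_le_sum fun i _ => ?_
    rw [apply_eq_sum_mul_apply_single, mul_comm]
    exact Finset.sum_mul_sq_le_sq_mul_sq _ _ _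
  rw [← Real.sqrt_sq (norm_nonneg x), ← Real.sqrt_mul (frobSq_nonneg D)]
  exact Real.le_sqrt_of_sq_le hsq

lemma frobSq_sub_le (A B : EuclideanSpace ℝ ι →L[ℝ] EuclideanSpace ℝ κ) :
    frobSq (A - B) ≤ 2 * frobSq A + 2 * frobSq B := by
  simp only [frobSq, Finset.mul_sum, ← Finset.sum_add_distrib]
  gcongr with i _ j _
  simp only [sub_apply, PiLp.sub_apply]
  nlinarith [sq_nonneg (A (EuclideanSpace.single j 1) i + B (EuclideanSpace.single j 1) i)]

lemma abs_sum_apply_mul_le (D : EuclideanSpace ℝ ι →L[ℝ] EuclideanSpace ℝ ι)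
    (x : EuclideanSpace ℝ ι) : |∑ i, D x i * x i| ≤ √(frobSq D) * ‖x‖ ^ 2 := by
  have h : ∑ i, D x i * x i = inner ℝ x (D x) := by
    simp [PiLp.inner_apply, mul_comm]
  calc |∑ i, D x i * x i| ≤ ‖D x‖ * ‖x‖ := by rw [h, mul_comm]; exact abs_real_inner_le_norm _ _
    _ ≤ √(frobSq D) * ‖x‖ * ‖x‖ := by gcongr; exact norm_apply_le_sqrt_frobSq_mul D x
    _ = √(frobSq D) * ‖x‖ ^ 2 := by ring

end Frobenius

section Jacobian

variable {u v w : EuclideanSpace ℝ (Fin 3) → EuclideanSpace ℝ (Fin 3)}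
  {p : EuclideanSpace ℝ (Fin 3)}

lemma jacFrobSq_nonneg (v : EuclideanSpace ℝ (Fin 3) → EuclideanSpace ℝ (Fin 3))
    (p : EuclideanSpace ℝ (Fin 3)) : 0 ≤ jacFrobSq v p :=
  frobSq_nonneg (fderiv ℝ v p)

lemma measurable_jacFrobSq (v : EuclideanSpace ℝ (Fin 3) → EuclideanSpace ℝ (Fin 3)) :
    Measurable (jacFrobSq v) := by
  unfold jacFrobSq
  refine Finset.measurable_sum _ fun i _ => Finset.measurable_sum _ fun j _ => ?_
  exact ((measurable_pi_apply i).comp ((WithLp.measurable_ofLp 2 _).comp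
    (measurable_fderiv_apply_const ℝ v (EuclideanSpace.single j 1)))).pow_const 2

lemma jacFrobSq_sub_le (hu : DifferentiableAt ℝ u p) (hv : DifferentiableAt ℝ v p) :
    jacFrobSq (fun q => u q - v q) p ≤ 2 * jacFrobSq u p + 2 * jacFrobSq v p := by
  have h := frobSq_sub_le (fderiv ℝ u p) (fderiv ℝ v p)
  rwa [← fderiv_fun_sub hu hv] at h

lemma jacFrobSq_le_of_sub (hu : DifferentiableAt ℝ u p) (hv : DifferentiableAt ℝ v p) :
    jacFrobSq v p ≤ 2 * jacFrobSq u p + 2 * jacFrobSq (fun q => u q - v q) p := by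
  have h := frobSq_sub_le (fderiv ℝ u p) (fderiv ℝ (fun q => u q - v q) p)
  have hv' : fderiv ℝ u p - fderiv ℝ (fun q => u q - v q) p = fderiv ℝ v p := by
    rw [fderiv_fun_sub hu hv, sub_sub_cancel]
  rwa [hv'] at h

lemma abs_convTerm_le : |convTerm w v w p| ≤ √(jacFrobSq v p) * ‖w p‖ ^ 2 :=
  abs_sum_apply_mul_le (fderiv ℝ v p) (w p)

end Jacobian

section Integral

variable {s : Set (EuclideanSpace ℝ (Fin 3))}
  {u v w : EuclideanSpace ℝ (Fin 3) → EuclideanSpace ℝ (Fin 3)}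

lemma abs_setIntegral_convTerm_le (hs : MeasurableSet s) {c : ℝ}
    (hv : ∀ p ∈ s, √(jacFrobSq v p) ≤ c) (hw : IntegrableOn (fun p => ‖w p‖ ^ 2) s)
    (hconv : IntegrableOn (convTerm w v w) s) :
    |∫ p in s, convTerm w v w p| ≤ c * ∫ p in s, ‖w p‖ ^ 2 := by
  rw [← integral_const_mul]
  refine abs_integral_le_integral_abs.trans
    (setIntegral_mono_on hconv.abs (hw.const_mul c) hs fun p hp => ?_)
  exact abs_convTerm_le.trans (by gcongr; exact hv p hp)

lemma setIntegral_jacFrobSq_sub_le (hs : IsOpen s)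
    (hu : DifferentiableOn ℝ u s) (hv : DifferentiableOn ℝ v s)
    (hu_int : IntegrableOn (jacFrobSq u) s)
    (huv_int : IntegrableOn (jacFrobSq (fun q => u q - v q)) s) :
    ∫ p in s, jacFrobSq (fun q => u q - v q) p ≤
      2 * (∫ p in s, jacFrobSq u p) + 2 * ∫ p in s, jacFrobSq v p := by
  have hdiff : ∀ p ∈ s, DifferentiableAt ℝ u p ∧ DifferentiableAt ℝ v p := fun p hp =>
    ⟨hu.differentiableAt (hs.mem_nhds hp), hv.differentiableAt (hs.mem_nhds hp)⟩
  have hv_int : IntegrableOn (jacFrobSq v) s := by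
    refine Integrable.mono' ((hu_int.const_mul 2).add (huv_int.const_mul 2))
      (measurable_jacFrobSq v).aestronglyMeasurable
      ((ae_restrict_iff' hs.measurableSet).2 (ae_of_all _ fun p hp => ?_))
    rw [Real.norm_of_nonneg (jacFrobSq_nonneg v p)]
    exact jacFrobSq_le_of_sub (hdiff p hp).1 (hdiff p hp).2
  rw [← integral_const_mul, ← integral_const_mul,
    ← integral_add (hu_int.const_mul 2) (hv_int.const_mul 2)]
  exact setIntegral_mono_on huv_int ((hu_int.const_mul 2).add (hv_int.const_mul 2))
    hs.measurableSet fun p hp => jacFrobSq_sub_le (hdiff p hp).1 (hdiff p hp).2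

end Integral

section Box

variable {ι : Type*} [Fintype ι]

lemma isOpen_setOf_forall_mem_Ioo (a b : ι → ℝ) :
    IsOpen {p : EuclideanSpace ℝ ι | ∀ i, p i ∈ Ioo (a i) (b i)} := by
  simp only [Set.ofPred_forall]
  exact isOpen_iInter_of_finite fun i => isOpen_Ioo.preimage (by fun_prop)

lemma setOf_forall_mem_Icc_ae_eq_Ioo (a b : ι → ℝ) :
    {p : EuclideanSpace ℝ ι | ∀ i, p i ∈ Icc (a i) (b i)} =ᵐ[volume]
      {p : EuclideanSpace ℝ ι | ∀ i, p i ∈ Ioo (a i) (b i)} := by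
  simpa only [preimage, mem_univ_pi] using
    (PiLp.volume_preserving_ofLp ι).quasiMeasurePreserving.preimage_ae_eq
      (Measure.pi_Ioo_ae_eq_pi_Icc (s := univ) (f := a) (g := b)).symm

end Box

theorem stmt_15_general (U L γ : ℝ) (hU : 0 < U) (hL : 0 < L) (hγ : γ ∈ Set.Ioo (0:ℝ) 1)
    (Ω O : Set (EuclideanSpace ℝ (Fin 3)))
    (hΩ : Ω = {p : EuclideanSpace ℝ (Fin 3) | ∀ i, p i ∈ Set.Ioo (0:ℝ) L})
    (hO : O = {p : EuclideanSpace ℝ (Fin 3) |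
      p 0 ∈ Set.Icc (0:ℝ) L ∧ p 1 ∈ Set.Icc (0:ℝ) L ∧ p 2 ∈ Set.Icc (L - γ*L) L})
    (u Φ : EuclideanSpace ℝ (Fin 3) → EuclideanSpace ℝ (Fin 3))
    (hu : ContDiffOn ℝ 1 u Ω) (hΦc : ContDiffOn ℝ 1 Φ Ω)
    (hgradΦinf : ∀ p ∈ O, Real.sqrt (jacFrobSq Φ p) ≤ U/(γ*L))
    (hPoin : (∫ p in O, ‖u p - Φ p‖^2) ≤
      (γ*L)^2 * ∫ p in O, jacFrobSq (fun q => u q - Φ q) p)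
    (hgradΦ : (∫ p in Ω, jacFrobSq Φ p) ≤ U^2 * L / γ)
    (hint1 : MeasureTheory.IntegrableOn (fun p => ‖u p - Φ p‖^2) O)
    (hint2 : MeasureTheory.IntegrableOn (jacFrobSq u) Ω)
    (hint3 : MeasureTheory.IntegrableOn (jacFrobSq (fun q => u q - Φ q)) Ω)
    (hint4 : MeasureTheory.IntegrableOn (convTerm (fun q => u q - Φ q) Φ (fun q => u q - Φ q)) O) :
    |∫ p in O, convTerm (fun q => u q - Φ q) Φ (fun q => u q - Φ q) p| ≤
      2*γ*L*U * (∫ p in Ω, jacFrobSq u p) + 2*U^3*L^2 := by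
  obtain ⟨hγ0, hγ1⟩ := hγ
  have hΩopen : IsOpen Ω := hΩ ▸ isOpen_setOf_forall_mem_Ioo (fun _ => 0) (fun _ => L)
  have hOm : MeasurableSet O := by rw [hO]; measurability
  have hOΩ : O ≤ᵐ[volume] Ω := by
    rw [hO, hΩ]
    refine .trans (LE.le.eventuallyLE ?_)
      (setOf_forall_mem_Icc_ae_eq_Ioo (ι := Fin 3) (fun _ => 0) (fun _ => L)).le
    rintro p ⟨h0, h1, h2⟩ i
    have h2' : 0 ≤ L - γ * L := by nlinarith
    fin_cases i
    exacts [h0, h1, ⟨h2'.trans h2.1, h2.2⟩]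
  calc |∫ p in O, convTerm (fun q => u q - Φ q) Φ (fun q => u q - Φ q) p|
      ≤ U / (γ * L) * ∫ p in O, ‖u p - Φ p‖ ^ 2 :=
        abs_setIntegral_convTerm_le hOm hgradΦinf hint1 hint4
    _ ≤ U / (γ * L) * ((γ * L) ^ 2 * ∫ p in O, jacFrobSq (fun q => u q - Φ q) p) := by
        gcongr
    _ = γ * L * U * ∫ p in O, jacFrobSq (fun q => u q - Φ q) p := by
        field_simp
    _ ≤ γ * L * U * ∫ p in Ω, jacFrobSq (fun q => u q - Φ q) p := by
        gcongr ?_ * ?_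
        exact setIntegral_mono_set hint3 (ae_of_all _ (jacFrobSq_nonneg _)) hOΩ
    _ ≤ γ * L * U * (2 * (∫ p in Ω, jacFrobSq u p) + 2 * (U ^ 2 * L / γ)) := by
        gcongr
        exact (setIntegral_jacFrobSq_sub_le hΩopen hu.differentiableOn_one
          hΦc.differentiableOn_one hint2 hint3).trans (by gcongr)
    _ = 2*γ*L*U * (∫ p in Ω, jacFrobSq u p) + 2*U^3*L^2 := by
        field_simp

/-- Estimate (3.9): |∫_O ((u−Φ)·∇Φ)·(u−Φ)| ≤ 2γLU‖∇u‖² + 2U³L². -/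
theorem stmt_15 (U L γ : ℝ) (hU : 0 < U) (hL : 0 < L) (hγ : γ ∈ Set.Ioo (0:ℝ) 1)
    (Ω O : Set (EuclideanSpace ℝ (Fin 3)))
    (hΩ : Ω = {p : EuclideanSpace ℝ (Fin 3) | ∀ i, p i ∈ Set.Ioo (0:ℝ) L})
    (hO : O = {p : EuclideanSpace ℝ (Fin 3) |
      p 0 ∈ Set.Icc (0:ℝ) L ∧ p 1 ∈ Set.Icc (0:ℝ) L ∧ p 2 ∈ Set.Icc (L - γ*L) L})
    (u Φ : EuclideanSpace ℝ (Fin 3) → EuclideanSpace ℝ (Fin 3))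
    (hu : ContDiffOn ℝ 1 u Ω) (hΦc : ContDiffOn ℝ 1 Φ Ω)
    (hsupp : ∀ p, p ∉ O → Φ p = 0)
    (hgradΦinf : ∀ p ∈ O, Real.sqrt (jacFrobSq Φ p) ≤ U/(γ*L))
    (hPoin : (∫ p in O, ‖u p - Φ p‖^2) ≤
      (γ*L)^2 * ∫ p in O, jacFrobSq (fun q => u q - Φ q) p)
    (hgradΦ : (∫ p in Ω, jacFrobSq Φ p) ≤ U^2 * L / γ)
    (hint1 : MeasureTheory.IntegrableOn (fun p => ‖u p - Φ p‖^2) O)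
    (hint2 : MeasureTheory.IntegrableOn (jacFrobSq u) Ω)
    (hint3 : MeasureTheory.IntegrableOn (jacFrobSq (fun q => u q - Φ q)) Ω)
    (hint4 : MeasureTheory.IntegrableOn (convTerm (fun q => u q - Φ q) Φ (fun q => u q - Φ q)) O) :
    |∫ p in O, convTerm (fun q => u q - Φ q) Φ (fun q => u q - Φ q) p| ≤
      2*γ*L*U * (∫ p in Ω, jacFrobSq u p) + 2*U^3*L^2 :=
  stmt_15_general U L γ hU hL hγ Ω O hΩ hO u Φ hu hΦc hgradΦinf hPoin hgradΦ hint1 hint2 hint3 hint4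
end
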